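/- arXiv:1506.00811 — 3 statements merged into one kernel-verified Lean document; each statement's English description precedes it below -/
import Mathlib

section
/- Let K be a field of characteristic zero and let G be an ANC group (a finite nilpotent group all of whose abelian normal subgroups are cyclic). Then there exist a nonzero finite-dimensional K-vector space V and a subgroup H of GL(V) such that H is isomorphic to G as an abstract group and H is irreducible, i.e. the only K-subspaces of V invariant under every element of H are 0 and V. -/
/-!
The centre `Z(G)` is abelian and normal, hence cyclic, say generated by `z` of order `n`. Since `G`
is nilpotent, every nontrivial normal subgroup meets `Z(G)` nontrivially, so a representation of
`G` is faithful as soon as `z` acts with order exactly `n`. Writing `Xⁿ - 1 = Φₙ · h`, the element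
`h(z) ∈ K[G]` is nonzero, and `Φₙ(z)` kills the left ideal it generates; a minimal left ideal `V`
inside it is a simple `K[G]`-module, i.e. an irreducible representation, on which `Φₙ(z)` acts as
zero. As `Xⁿ - 1` is squarefree in characteristic zero, `Φₙ` is coprime to `Xᵐ - 1` for every
proper divisor `m` of `n`, so `z` acts on `V` with order exactly `n`, and `V` is faithful.
-/

open Polynomial
open scoped MonoidAlgebra

theorem Subgroup.Normal.eq_bot_of_inf_center_eq_bot {G : Type*} [Group G] [Group.IsNilpotent G]
    {N : Subgroup G} (hN : N.Normal) (h : N ⊓ center G = ⊥) : N = ⊥ := by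
  have hζ (i : ℕ) : N ⊓ upperCentralSeries G i = ⊥ := by
    induction i with
    | zero => simp
    | succ i ih =>
      rw [eq_bot_iff, ← h]
      intro x hx
      obtain ⟨hxN, hxζ⟩ := mem_inf.mp hx
      refine mem_inf.mpr ⟨hxN, mem_center_iff.mpr fun g => ?_⟩
      have hcomm : x * g * x⁻¹ * g⁻¹ ∈ N ⊓ upperCentralSeries G i := by
        refine mem_inf.mpr ⟨?_, mem_upperCentralSeries_succ_iff.mp hxζ g⟩
        simpa only [mul_assoc] using N.mul_mem hxN (hN.conj_mem _ (N.inv_mem hxN) g)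
      rw [ih, mem_bot, mul_inv_eq_one, mul_inv_eq_iff_eq_mul] at hcomm
      exact hcomm.symm
  obtain ⟨c, hc⟩ := Group.IsNilpotent.nilpotent G
  simpa [hc] using hζ c

theorem MonoidHom.injective_of_orderOf_map_eq {G H : Type*} [Group G] [Monoid H]
    [Group.IsNilpotent G] (f : G →* H) {z : G} (hz : Subgroup.center G ≤ Subgroup.zpowers z)
    (hf : orderOf (f z) = orderOf z) : Function.Injective f := by
  rw [← f.ker_eq_bot_iff]
  refine f.normal_ker.eq_bot_of_inf_center_eq_bot (eq_bot_iff.mpr fun g hg => ?_)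
  obtain ⟨hg, hgZ⟩ := Subgroup.mem_inf.mp hg
  obtain ⟨k, rfl⟩ := Subgroup.mem_zpowers_iff.mp (hz hgZ)
  have hk : f.toHomUnits z ^ k = 1 := by
    rw [← map_zpow]
    exact Units.ext hg
  rwa [← orderOf_dvd_iff_zpow_eq_one, ← orderOf_units, coe_toHomUnits, hf,
    orderOf_dvd_iff_zpow_eq_one] at hk

theorem Polynomial.isCoprime_cyclotomic_X_pow_sub_one {K : Type*} [Field K] {n m : ℕ}
    [NeZero (n : K)] (hm : m ∈ n.properDivisors) : IsCoprime (cyclotomic n K) (X ^ m - 1) := by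
  have hsq : Squarefree ((X : K[X]) ^ n - 1) := by
    simpa using (separable_X_pow_sub_C (1 : K) (NeZero.ne (n : K)) one_ne_zero).squarefree
  exact (IsRelPrime.of_squarefree_mul (hsq.squarefree_of_dvd
    (X_pow_sub_one_mul_cyclotomic_dvd_X_pow_sub_one_of_dvd K hm))).symm.isCoprime

theorem orderOf_eq_of_aeval_cyclotomic_eq_zero {K A : Type*} [Field K] [Ring A] [Algebra K A]
    [Nontrivial A] {n : ℕ} [NeZero (n : K)] {a : A} (ha : aeval a (cyclotomic n K) = 0) :
    orderOf a = n := by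
  have hn : 0 < n := Nat.pos_of_ne_zero fun h => NeZero.ne (n : K) (by simp [h])
  have han : a ^ n = 1 := by
    obtain ⟨q, hq⟩ := cyclotomic.dvd_X_pow_sub_one n K
    simpa [ha, sub_eq_zero] using congrArg (aeval a) hq
  by_contra hne
  have hmem : orderOf a ∈ n.properDivisors := Nat.mem_properDivisors.mpr
    ⟨orderOf_dvd_of_pow_eq_one han,
      lt_of_le_of_ne (Nat.le_of_dvd hn (orderOf_dvd_of_pow_eq_one han)) hne⟩
  obtain ⟨u, v, huv⟩ := isCoprime_cyclotomic_X_pow_sub_one (K := K) hmem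
  simpa [ha, pow_orderOf_eq_one] using congrArg (aeval a) huv

theorem MonoidAlgebra.aeval_of_ne_zero {R G : Type*} [CommSemiring R] [Monoid G] {g : G}
    {p : R[X]} (hp : p ≠ 0) (hdeg : p.natDegree < orderOf g) : aeval (of R G g) p ≠ 0 := by
  classical
  have hterm (i : ℕ) : (p.coeff i • of R G g ^ i).coeff (g ^ p.natDegree) =
      if g ^ i = g ^ p.natDegree then p.coeff i else 0 := by
    rw [← map_pow, of_apply, smul_single', mul_one, coeff_single, Finsupp.single_apply]
  have hlead : (aeval (of R G g) p).coeff (g ^ p.natDegree) = p.leadingCoeff := by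
    rw [aeval_eq_sum_range, coeff_sum, Finset.sum_apply', Finset.sum_eq_single p.natDegree]
    · simp
    · intro i hi hne
      rw [hterm, if_neg]
      exact fun h => hne (pow_injOn_Iio_orderOf (by simp at hi ⊢; omega) hdeg h)
    · simp
  intro h
  rw [h] at hlead
  exact leadingCoeff_ne_zero.mpr hp (by simpa using hlead.symm)

theorem Polynomial.exists_X_pow_sub_one_eq_cyclotomic_mul {K : Type*} [Field K] {n : ℕ}
    (hn : 0 < n) : ∃ h : K[X], h ≠ 0 ∧ h.natDegree < n ∧ X ^ n - 1 = cyclotomic n K * h := by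
  obtain ⟨h, hh⟩ := cyclotomic.dvd_X_pow_sub_one n K
  have hdeg := natDegree_X_pow_sub_C (n := n) (r := (1 : K))
  rw [C_1, hh] at hdeg
  have hh0 : h ≠ 0 := by
    rintro rfl
    simp only [mul_zero, natDegree_zero] at hdeg
    omega
  rw [natDegree_mul (cyclotomic_ne_zero _ K) hh0, natDegree_cyclotomic] at hdeg
  have := Nat.totient_pos.mpr hn
  exact ⟨h, hh0, by omega, hh⟩

theorem MonoidAlgebra.of_mem_center {K G : Type*} [CommSemiring K] [Monoid G] {z : G}
    (hz : z ∈ Submonoid.center G) : of K G z ∈ Subalgebra.center K K[G] :=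
  Subalgebra.mem_center_iff.mpr fun a =>
    (single_commute (fun g => (Submonoid.mem_center_iff.mp hz g).symm) Commute.one_left a).eq.symm

theorem MonoidAlgebra.exists_isAtom_forall_aeval_cyclotomic_mul_eq_zero {K G : Type*} [Field K]
    [Group G] [Finite G] {z : G} (hz : z ∈ Subgroup.center G) :
    ∃ V : Submodule K[G] K[G], IsAtom V ∧
      ∀ v ∈ V, aeval (of K G z) (cyclotomic (orderOf z) K) * v = 0 := by
  obtain ⟨h, hh0, hdeg, hh⟩ := exists_X_pow_sub_one_eq_cyclotomic_mul (K := K) (orderOf_pos z)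
  have : IsArtinianRing K[G] := IsArtinianRing.of_finite K K[G]
  obtain ⟨V, hV, hVle⟩ := (eq_bot_or_exists_atom_le (K[G] ∙ aeval (of K G z) h)).resolve_left
    (by simpa using aeval_of_ne_zero hh0 hdeg)
  refine ⟨V, hV, fun v hv => ?_⟩
  obtain ⟨a, rfl⟩ := Submodule.mem_span_singleton.mp (hVle hv)
  let c : Subalgebra.center K K[G] := ⟨of K G z, of_mem_center hz⟩
  have hcomm : a * aeval (of K G z) (cyclotomic (orderOf z) K) =
      aeval (of K G z) (cyclotomic (orderOf z) K) * a := by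
    rw [← aeval_subalgebra_coe _ _ c]
    exact Subalgebra.mem_center_iff.mp (aeval c _).2 a
  calc aeval (of K G z) (cyclotomic (orderOf z) K) * (a • aeval (of K G z) h)
      = a * aeval (of K G z) ((X : K[X]) ^ orderOf z - 1) := by
        rw [smul_eq_mul, ← mul_assoc, ← hcomm, mul_assoc, ← map_mul, ← hh]
    _ = 0 := by rw [map_sub, map_pow, aeval_X, ← map_pow, pow_orderOf_eq_one, map_one, map_one,
        sub_self, mul_zero]

namespace Representation

variable {K G M : Type*} [Field K] [Monoid G] [AddCommGroup M] [Module K M] [Module K[G] M]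
  [IsScalarTower K K[G] M]

theorem ofModule'_asAlgebraHom_apply (r : K[G]) (m : M) :
    (ofModule' (k := K) (G := G) M).asAlgebraHom r m = r • m := by
  simp [asAlgebraHom, ofModule']

theorem ofModule'_apply (g : G) (m : M) :
    ofModule' (k := K) (G := G) M g m = MonoidAlgebra.of K G g • m := by
  rw [← asAlgebraHom_of, ofModule'_asAlgebraHom_apply]

theorem isIrreducible_ofModule' [IsSimpleModule K[G] M] :
    (ofModule' (k := K) (G := G) M).IsIrreducible := by
  let e : Submodule K[G] M ≃o Subrepresentation (ofModule' (k := K) (G := G) M) :=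
    { toFun N := ⟨N.restrictScalars K, fun g v hv => by
        simpa [ofModule'_apply] using N.smul_mem (MonoidAlgebra.of K G g) hv⟩
      invFun σ := { σ.toSubmodule with
        smul_mem' a v hv := by
          induction a using MonoidAlgebra.induction_linear with
          | zero => simp
          | add a b ha hb => simpa [add_smul] using σ.toSubmodule.add_mem ha hb
          | single g c =>
            rw [← mul_one c, ← MonoidAlgebra.smul_single', smul_assoc]
            exact σ.toSubmodule.smul_mem c
              (by simpa [ofModule'_apply] using σ.apply_mem_toSubmodule g hv) }
      left_inv N := rfl
      right_inv σ := rfl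
      map_rel_iff' := Iff.rfl }
  exact (OrderIso.isSimpleOrder_iff e).mp inferInstance

theorem orderOf_ofModule'_eq [Nontrivial M] {z : G} [NeZero (orderOf z : K)]
    (hM : ∀ m : M, aeval (MonoidAlgebra.of K G z) (cyclotomic (orderOf z) K) • m = 0) :
    orderOf (ofModule' (k := K) (G := G) M z) = orderOf z := by
  refine orderOf_eq_of_aeval_cyclotomic_eq_zero (K := K) (n := orderOf z) ?_
  rw [← asAlgebraHom_of, aeval_algHom_apply]
  ext m
  rw [ofModule'_asAlgebraHom_apply, hM, LinearMap.zero_apply]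

end Representation

theorem Representation.exists_irreducible_subgroup_generalLinearGroup
    {K G W : Type*} [Field K] [Group G] [AddCommGroup W] [Module K W] [Module.Finite K W]
    (ρ : Representation K G W) [ρ.IsIrreducible] (hρ : Function.Injective ρ) :
    ∃ (d : ℕ) (H : Subgroup (Matrix.GeneralLinearGroup (Fin d) K)),
      0 < d ∧ Nonempty (G ≃* ↥H) ∧
      ∀ U : Submodule K (Fin d → K),
        (∀ g ∈ H, ∀ v ∈ U, Matrix.mulVec (g : Matrix (Fin d) (Fin d) K) v ∈ U) →
        U = ⊥ ∨ U = ⊤ := by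
  have : Nontrivial W := by
    by_contra h
    rw [not_nontrivial_iff_subsingleton] at h
    exact bot_ne_top (α := Subrepresentation ρ)
      (Subrepresentation.toSubmodule_injective (Subsingleton.elim _ _))
  let b := Module.finBasis K W
  let ψ : G →* Matrix.GeneralLinearGroup (Fin (Module.finrank K W)) K :=
    ((LinearMap.toMatrixAlgEquiv b).toMonoidHom.comp ρ).toHomUnits
  have hψ (g : G) (v : W) : (ψ g : Matrix _ _ K).mulVec (b.equivFun v) = b.equivFun (ρ g v) :=
    LinearMap.toMatrix_mulVec_repr b b (ρ g) v
  have hψinj : Function.Injective ψ := fun g h hgh =>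
    hρ ((LinearMap.toMatrixAlgEquiv b).injective (congrArg Units.val hgh))
  refine ⟨_, ψ.range, Module.finrank_pos, ⟨MonoidHom.ofInjective hψinj⟩, fun U hU => ?_⟩
  let U' : Subrepresentation ρ := ⟨U.comap b.equivFun.toLinearMap, fun g v hv => by
    simpa only [Submodule.mem_comap, LinearEquiv.coe_coe, ← hψ] using
      hU (ψ g) ⟨g, rfl⟩ (b.equivFun v) hv⟩
  rw [← Submodule.map_comap_eq_of_surjective b.equivFun.surjective U]
  rcases eq_bot_or_eq_top U' with h | h
  · have hU' : U.comap b.equivFun.toLinearMap = ⊥ := congrArg Subrepresentation.toSubmodule h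
    simp [hU']
  · have hU' : U.comap b.equivFun.toLinearMap = ⊤ := congrArg Subrepresentation.toSubmodule h
    simp [hU']

/-- Every ANC group (a finite nilpotent group all of whose abelian normal
subgroups are cyclic) is isomorphic to an irreducible linear group over any field `K` of
characteristic zero, i.e. to a subgroup `H` of `GL_d(K)` (for some `d ≥ 1`) such that the only
`K`-subspaces of `K^d` invariant under every element of `H` are `0` and everything. -/
theorem stmt_0 (K : Type*) [Field K] [CharZero K]
    (G : Type*) [Group G] [Finite G] [Group.IsNilpotent G]
    (hANC : ∀ A : Subgroup G, A.Normal → (∀ x y : ↥A, x * y = y * x) → IsCyclic ↥A) :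
    ∃ (d : ℕ) (H : Subgroup (Matrix.GeneralLinearGroup (Fin d) K)),
      0 < d ∧ Nonempty (G ≃* ↥H) ∧
      ∀ U : Submodule K (Fin d → K),
        (∀ g ∈ H, ∀ v ∈ U, Matrix.mulVec (g : Matrix (Fin d) (Fin d) K) v ∈ U) →
        U = ⊥ ∨ U = ⊤ := by
  have hZ : IsCyclic (Subgroup.center G) :=
    hANC _ inferInstance fun x y => Subtype.ext (Subgroup.mem_center_iff.mp y.2 x)
  obtain ⟨z, hzZ⟩ := (Subgroup.center G).isCyclic_iff_exists_zpowers_eq_top.mp hZ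
  have hz : z ∈ Subgroup.center G := hzZ ▸ Subgroup.mem_zpowers z
  have : NeZero (orderOf z : K) := ⟨Nat.cast_ne_zero.mpr (orderOf_pos z).ne'⟩
  obtain ⟨V, hV, hΦ⟩ := MonoidAlgebra.exists_isAtom_forall_aeval_cyclotomic_mul_eq_zero (K := K) hz
  have : IsSimpleModule K[G] V := isSimpleModule_iff_isAtom.mpr hV
  have : Nontrivial V := IsSimpleModule.nontrivial K[G] V
  let ρ := Representation.ofModule' (k := K) (G := G) V
  have : ρ.IsIrreducible := Representation.isIrreducible_ofModule'
  have hρz : orderOf (ρ z) = orderOf z :=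
    Representation.orderOf_ofModule'_eq fun v => Subtype.ext (hΦ v v.2)
  exact Representation.exists_irreducible_subgroup_generalLinearGroup ρ
    (MonoidHom.injective_of_orderOf_map_eq ρ hzZ.ge hρz)
end

section
/- Let K be a subfield of the field ℚ̄ of algebraic numbers, let n ∈ ℕ, and let p be a prime dividing n. Then [E_nK : E_{n/p}K] = p if and only if p² divides n and p divides n / c_K(n) (note that c_K(n) divides n). -/
noncomputable section

/-- The primitive `n`-th root of unity `exp(2πi/n)` in `ℂ`. -/
def zetaC (n : ℕ) : ℂ := Complex.exp (2 * Real.pi * Complex.I / n)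

/-- The `n`-th cyclotomic field `E_n = ℚ(ζ_n)`, as an intermediate field of `ℂ/ℚ`. -/
def Ecyc (n : ℕ) : IntermediateField ℚ ℂ := IntermediateField.adjoin ℚ {zetaC n}

/-- Writing `n = 2^j * m` with `m` odd, `E_n^+ = ℚ(ζ_{2^j} + ζ_{2^j}⁻¹)·E_m` if `j ≥ 3`,
and `E_n^+ = E_m` if `j ≤ 2`. -/
def EcycP (n : ℕ) : IntermediateField ℚ ℂ :=
  if 3 ≤ n.factorization 2 then
    IntermediateField.adjoin ℚ
        {zetaC (2 ^ n.factorization 2) + (zetaC (2 ^ n.factorization 2))⁻¹} ⊔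
      Ecyc (n / 2 ^ n.factorization 2)
  else Ecyc (n / 2 ^ n.factorization 2)

/-- Writing `n = 2^j * m` with `m` odd, `E_n^- = ℚ(ζ_{2^j} - ζ_{2^j}⁻¹)·E_m` if `j ≥ 3`,
and `E_n^- = E_m` if `j ≤ 2`. -/
def EcycM (n : ℕ) : IntermediateField ℚ ℂ :=
  if 3 ≤ n.factorization 2 then
    IntermediateField.adjoin ℚ
        {zetaC (2 ^ n.factorization 2) - (zetaC (2 ^ n.factorization 2))⁻¹} ⊔
      Ecyc (n / 2 ^ n.factorization 2)
  else Ecyc (n / 2 ^ n.factorization 2)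

/-- The gcd of a set of natural numbers (`0` if the set is empty), realised as the
largest common divisor. -/
def setGcd (S : Set ℕ) : ℕ := sSup {g : ℕ | ∀ s ∈ S, g ∣ s}

/-- `𝔇_K(n) = {d ∈ ℕ : K ∩ E_n ⊆ E_d}` (with `d` positive). -/
def Dset (K : IntermediateField ℚ ℂ) (n : ℕ) : Set ℕ :=
  {d | 0 < d ∧ K ⊓ Ecyc n ≤ Ecyc d}

/-- `𝔇_K^+(n) = {d ∈ ℕ : K ∩ E_n ⊆ E_d^+}` (with `d` positive). -/
def DsetP (K : IntermediateField ℚ ℂ) (n : ℕ) : Set ℕ :=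
  {d | 0 < d ∧ K ⊓ Ecyc n ≤ EcycP d}

/-- `𝔇_K^-(n) = {d ∈ ℕ : K ∩ E_n ⊆ E_d^-}` (with `d` positive). -/
def DsetM (K : IntermediateField ℚ ℂ) (n : ℕ) : Set ℕ :=
  {d | 0 < d ∧ K ⊓ Ecyc n ≤ EcycM d}

/-- `c_K(n) = gcd 𝔇_K(n)`. -/
def cK (K : IntermediateField ℚ ℂ) (n : ℕ) : ℕ := setGcd (Dset K n)

/-- `c_K^+(n) = gcd 𝔇_K^+(n)`. -/
def cKP (K : IntermediateField ℚ ℂ) (n : ℕ) : ℕ := setGcd (DsetP K n)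

/-- `c_K^-(n) = gcd 𝔇_K^-(n)`. -/
def cKM (K : IntermediateField ℚ ℂ) (n : ℕ) : ℕ := setGcd (DsetM K n)

/-- The compositum `F·A`, viewed as a field extension of `A`. -/
def relField (F A : IntermediateField ℚ ℂ) : IntermediateField ↥A ℂ :=
  IntermediateField.extendScalars (le_sup_right : A ≤ F ⊔ A)

/-- The relative degree `[F·A : A]`. -/
def relDeg (F A : IntermediateField ℚ ℂ) : ℕ := Module.finrank ↥A ↥(relField F A)

/-- The Galois group `Gal(F·A / A)`. -/
abbrev RelGal (F A : IntermediateField ℚ ℂ) :=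
  ↥(relField F A) ≃ₐ[↥A] ↥(relField F A)

end

/-! If `E = ℚ(ζ)` is cyclotomic then `[E L : L] = [E : E ∩ L]` for every field `L ⊆ ℂ`:
the minimal polynomial of `ζ` over `L` has all its roots, hence all its coefficients, in `E`.
With `L = E_{n/p} K` this makes `[E_n K : E_{n/p} K] = [E_n : E_n ∩ E_{n/p} K]` a divisor of
`[E_n : E_{n/p}] = φ(n)/φ(n/p)`, which is `p` if `p² ∣ n` and `p - 1` otherwise. When `p² ∣ n`,
comparing `[E_n K : K] = [E_n : E_n ∩ K]` with `[E_{n/p} K : K] = [E_{n/p} : E_{n/p} ∩ K]` shows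
that the degree is `p` exactly when `K ∩ E_n ⊆ E_{n/p}`. Finally `E_a ∩ E_b = E_{gcd(a,b)}`
(compare degrees, using `φ(gcd) φ(lcm) = φ(a) φ(b)`), so `𝔇_K(n)` is closed under `gcd`,
`c_K(n)` is its least element, and `K ∩ E_n ⊆ E_{n/p}` iff `c_K(n) ∣ n/p` iff `p ∣ n/c_K(n)`. -/

open Polynomial IntermediateField

section NaturalIrrationalities

variable {F E : Type*} [Field F] [Field E] [Algebra F E]

theorem natDegree_minpoly_le_of_le {A B : IntermediateField F E} (h : A ≤ B) {x : E}
    (hx : IsIntegral A x) : (minpoly B x).natDegree ≤ (minpoly A x).natDegree := by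
  have hmon := (minpoly.monic hx).map (inclusion h).toRingHom
  have hroot : aeval x ((minpoly A x).map (inclusion h).toRingHom) = 0 := by
    rw [aeval_def, eval₂_map]
    exact minpoly.aeval A x
  calc (minpoly B x).natDegree ≤ ((minpoly A x).map (inclusion h).toRingHom).natDegree :=
        natDegree_le_natDegree (minpoly.min B x hmon hroot)
    _ = (minpoly A x).natDegree := (minpoly.monic hx).natDegree_map _

theorem relfinrank_sup_adjoin_simple {x : E} (hx : IsIntegral F x) (L : IntermediateField F E) :
    relfinrank L (F⟮x⟯ ⊔ L) = (minpoly L x).natDegree := by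
  have hext : extendScalars (le_sup_right : L ≤ F⟮x⟯ ⊔ L) = L⟮x⟯ := by
    apply restrictScalars_injective F
    rw [extendScalars_restrictScalars, restrictScalars_adjoin_eq_sup, sup_comm]
  rw [relfinrank_eq_finrank_of_le le_sup_right, hext]
  exact adjoin.finrank hx.tower_top

theorem relfinrank_adjoin_simple {x : E} (hx : IsIntegral F x) {M : IntermediateField F E}
    (hM : M ≤ F⟮x⟯) : relfinrank M F⟮x⟯ = (minpoly M x).natDegree := by
  rw [← relfinrank_sup_adjoin_simple hx M, sup_eq_left.mpr hM]

theorem natDegree_minpoly_adjoin_simple_inf {x : E} (hx : IsIntegral F x)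
    (hsplit : ((minpoly F x).map (algebraMap F E)).Splits)
    (hroots : ∀ r : E, aeval r (minpoly F x) = 0 → r ∈ F⟮x⟯) (L : IntermediateField F E) :
    (minpoly ↥(F⟮x⟯ ⊓ L) x).natDegree = (minpoly L x).natDegree := by
  refine le_antisymm ?_ (natDegree_minpoly_le_of_le inf_le_right hx.tower_top)
  set P := (minpoly L x).map (algebraMap L E) with hP
  have hPm : P.Monic := (minpoly.monic hx.tower_top).map _
  have hPdvd : P ∣ (minpoly F x).map (algebraMap F E) := by
    have h := Polynomial.map_dvd (algebraMap L E) (minpoly.dvd_map_of_isScalarTower F L x)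
    rwa [Polynomial.map_map, ← IsScalarTower.algebraMap_eq] at h
  -- the roots of `P` are conjugates of `x`, so `P` has its coefficients in `F⟮x⟯`
  have hPA : P ∈ lifts (algebraMap F⟮x⟯ E) := by
    refine (hsplit.of_dvd (map_ne_zero (minpoly.ne_zero hx)) hPdvd).mem_lift_of_roots_mem_range
      hPm _ fun r hr => ⟨⟨r, hroots r ?_⟩, rfl⟩
    obtain ⟨q, hq⟩ := hPdvd
    rw [aeval_def, ← eval_map, hq, eval_mul, (mem_roots hPm.ne_zero).mp hr, zero_mul]
  have hPM : P ∈ lifts (algebraMap ↥(F⟮x⟯ ⊓ L) E) := by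
    rw [lifts_iff_coeff_lifts] at hPA ⊢
    intro i
    obtain ⟨a, ha⟩ := hPA i
    exact ⟨⟨P.coeff i, ha ▸ a.2, by rw [hP, coeff_map]; exact SetLike.coe_mem _⟩, rfl⟩
  obtain ⟨q, hq, hqdeg, hqm⟩ := lifts_and_natDegree_eq_and_monic hPM hPm
  have hqx : aeval x q = 0 := by
    rw [aeval_def, ← eval_map, hq, hP, eval_map, ← aeval_def, minpoly.aeval]
  calc (minpoly ↥(F⟮x⟯ ⊓ L) x).natDegree ≤ q.natDegree :=
        natDegree_le_natDegree (minpoly.min _ x hqm hqx)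
    _ = (minpoly L x).natDegree := by rw [hqdeg, hP, (minpoly.monic hx.tower_top).natDegree_map]

theorem relfinrank_sup_adjoin_simple_eq_relfinrank_inf {x : E} (hx : IsIntegral F x)
    (hsplit : ((minpoly F x).map (algebraMap F E)).Splits)
    (hroots : ∀ r : E, aeval r (minpoly F x) = 0 → r ∈ F⟮x⟯) (L : IntermediateField F E) :
    relfinrank L (F⟮x⟯ ⊔ L) = relfinrank (F⟮x⟯ ⊓ L) F⟮x⟯ := by
  rw [relfinrank_sup_adjoin_simple hx, relfinrank_adjoin_simple hx inf_le_left,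
    natDegree_minpoly_adjoin_simple_inf hx hsplit hroots]

end NaturalIrrationalities

section Cyclotomic

theorem isPrimitiveRoot_zetaC {n : ℕ} (hn : n ≠ 0) : IsPrimitiveRoot (zetaC n) n :=
  Complex.isPrimitiveRoot_exp n hn

/- The `Algebra ℚ` instance is pinned to `IntermediateField.algebra'`, the one used by the
`IntermediateField.isCyclotomicExtension_*` lemmas; instance search alone would find
`DivisionRing.toRatAlgebra`, which agrees only up to unfolding. -/
instance isCyclotomicExtension_Ecyc (n : ℕ) [NeZero n] :
    @IsCyclotomicExtension {n} ℚ (Ecyc n) _ _ (Ecyc n).algebra' :=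
  (IntermediateField.isCyclotomicExtension_singleton_iff_eq_adjoin n ℚ ℂ _
    (isPrimitiveRoot_zetaC (NeZero.ne n))).mpr rfl

theorem isIntegral_zetaC {n : ℕ} (hn : n ≠ 0) : IsIntegral ℚ (zetaC n) :=
  ((isPrimitiveRoot_zetaC hn).isIntegral (Nat.pos_of_ne_zero hn)).tower_top

theorem finrank_Ecyc {n : ℕ} (hn : n ≠ 0) : Module.finrank ℚ (Ecyc n) = n.totient := by
  rw [Ecyc, adjoin.finrank (isIntegral_zetaC hn),
    ← cyclotomic_eq_minpoly_rat (isPrimitiveRoot_zetaC hn) (Nat.pos_of_ne_zero hn),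
    natDegree_cyclotomic]

theorem Ecyc_le_Ecyc {d n : ℕ} (h : d ∣ n) (hn : n ≠ 0) : Ecyc d ≤ Ecyc n := by
  have : NeZero n := ⟨hn⟩
  have : NeZero d := ⟨ne_zero_of_dvd_ne_zero hn h⟩
  exact IntermediateField.isCyclotomicExtension_le_of_dvd ℚ ℂ d n _ _ h

theorem Ecyc_sup_Ecyc {a b : ℕ} (ha : a ≠ 0) (hb : b ≠ 0) :
    Ecyc a ⊔ Ecyc b = Ecyc (a.lcm b) := by
  have : NeZero a := ⟨ha⟩
  have : NeZero b := ⟨hb⟩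
  have : NeZero (a.lcm b) := ⟨Nat.lcm_ne_zero ha hb⟩
  have := IntermediateField.isCyclotomicExtension_lcm_sup ℚ ℂ a b (Ecyc a) (Ecyc b)
  exact IntermediateField.isCyclotomicExtension_eq {a.lcm b} ℚ ℂ _ _

theorem relfinrank_sup_Ecyc {n : ℕ} (hn : n ≠ 0) (L : IntermediateField ℚ ℂ) :
    relfinrank L (Ecyc n ⊔ L) = relfinrank (Ecyc n ⊓ L) (Ecyc n) := by
  refine relfinrank_sup_adjoin_simple_eq_relfinrank_inf (isIntegral_zetaC hn)
    (IsAlgClosed.splits _) (fun r hr => ?_) L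
  have hrn : r ^ n = 1 := by
    obtain ⟨q, hq⟩ := minpoly.dvd ℚ (zetaC n) (p := X ^ n - 1) (by
      simp [(isPrimitiveRoot_zetaC hn).pow_eq_one])
    simpa [hr, sub_eq_zero] using congrArg (aeval r) hq
  have : NeZero n := ⟨hn⟩
  obtain ⟨i, -, rfl⟩ := (isPrimitiveRoot_zetaC hn).eq_pow_of_pow_eq_one hrn
  exact pow_mem (mem_adjoin_simple_self ℚ _) i

theorem Nat.totient_gcd_mul_totient_lcm (a b : ℕ) :
    (a.gcd b).totient * (a.lcm b).totient = a.totient * b.totient := by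
  rcases eq_or_ne a 0 with rfl | ha
  · simp
  have hab := Nat.totient_gcd_mul_totient_mul a b
  have hgl := Nat.totient_gcd_mul_totient_mul (a.gcd b) (a.lcm b)
  rw [Nat.gcd_eq_left ((Nat.gcd_dvd_left a b).trans (Nat.dvd_lcm_left a b)),
    Nat.gcd_mul_lcm] at hgl
  exact Nat.eq_of_mul_eq_mul_right (Nat.gcd_pos_of_pos_left b (Nat.pos_of_ne_zero ha))
    (hgl.symm.trans hab)

theorem relfinrank_Ecyc_pos {n : ℕ} (hn : n ≠ 0) (A : IntermediateField ℚ ℂ) :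
    0 < relfinrank A (Ecyc n) := by
  have h := finrank_bot_mul_relfinrank (inf_le_right : A ⊓ Ecyc n ≤ Ecyc n)
  rw [finrank_Ecyc hn, inf_relfinrank_right] at h
  exact Nat.pos_of_mul_pos_left (h ▸ Nat.totient_pos.mpr (Nat.pos_of_ne_zero hn))

theorem Ecyc_inf_Ecyc {a b : ℕ} (ha : a ≠ 0) (hb : b ≠ 0) :
    Ecyc a ⊓ Ecyc b = Ecyc (a.gcd b) := by
  set M := Ecyc a ⊓ Ecyc b
  have hl : a.lcm b ≠ 0 := Nat.lcm_ne_zero ha hb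
  have hg : a.gcd b ≠ 0 := Nat.gcd_ne_zero_left ha
  have hgM : Ecyc (a.gcd b) ≤ M :=
    le_inf (Ecyc_le_Ecyc (Nat.gcd_dvd_left a b) ha) (Ecyc_le_Ecyc (Nat.gcd_dvd_right a b) hb)
  have hr : relfinrank (Ecyc b) (Ecyc (a.lcm b)) = relfinrank M (Ecyc a) := by
    rw [← Ecyc_sup_Ecyc ha hb]
    exact relfinrank_sup_Ecyc ha (Ecyc b)
  have hdeg_b := finrank_bot_mul_relfinrank (Ecyc_le_Ecyc (Nat.dvd_lcm_right a b) hl)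
  have hdeg_a := finrank_bot_mul_relfinrank (inf_le_left : M ≤ Ecyc a)
  rw [hr, finrank_Ecyc hb, finrank_Ecyc hl] at hdeg_b
  rw [finrank_Ecyc ha] at hdeg_a
  have hM : Module.finrank ℚ M = (a.gcd b).totient := by
    refine Nat.eq_of_mul_eq_mul_right
      (Nat.mul_pos (relfinrank_Ecyc_pos ha M) (Nat.totient_pos.mpr (Nat.pos_of_ne_zero hb))) ?_
    rw [← mul_assoc, hdeg_a, ← Nat.totient_gcd_mul_totient_lcm, ← hdeg_b]
    ring
  have hgM' := finrank_bot_mul_relfinrank hgM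
  rw [finrank_Ecyc hg, hM] at hgM'
  refine le_antisymm (relfinrank_eq_one_iff.mp ?_) hgM
  exact Nat.eq_of_mul_eq_mul_left (Nat.totient_pos.mpr (Nat.pos_of_ne_zero hg))
    (hgM'.trans (mul_one _).symm)

theorem relfinrank_Ecyc_mul_prime {p m : ℕ} (hp : p.Prime) (hm : m ≠ 0) :
    relfinrank (Ecyc m) (Ecyc (p * m)) = if p ∣ m then p else p - 1 := by
  have h := finrank_bot_mul_relfinrank (Ecyc_le_Ecyc (dvd_mul_left m p) (mul_ne_zero hp.ne_zero hm))
  rw [finrank_Ecyc hm, finrank_Ecyc (mul_ne_zero hp.ne_zero hm)] at h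
  refine Nat.eq_of_mul_eq_mul_left (Nat.totient_pos.mpr (Nat.pos_of_ne_zero hm)) (h.trans ?_)
  split_ifs with hpm
  · rw [Nat.totient_mul_of_prime_of_dvd hp hpm, mul_comm]
  · rw [Nat.totient_mul_of_prime_of_not_dvd hp hpm, mul_comm]

end Cyclotomic

section Conductor

theorem setGcd_eq_of_mem_of_forall_dvd {S : Set ℕ} {d : ℕ} (hd : 0 < d) (hdS : d ∈ S)
    (hdvd : ∀ s ∈ S, d ∣ s) : setGcd S = d :=
  IsGreatest.csSup_eq ⟨hdvd, fun _ hg => Nat.le_of_dvd hd (hg d hdS)⟩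

variable (K : IntermediateField ℚ ℂ) {n : ℕ}

theorem gcd_mem_Dset {a b : ℕ} (ha : a ∈ Dset K n) (hb : b ∈ Dset K n) :
    a.gcd b ∈ Dset K n :=
  ⟨Nat.gcd_pos_of_pos_left b ha.1,
    (le_inf ha.2 hb.2).trans (Ecyc_inf_Ecyc ha.1.ne' hb.1.ne').le⟩

theorem exists_mem_Dset_forall_dvd (hn : 0 < n) : ∃ c ∈ Dset K n, ∀ d ∈ Dset K n, c ∣ d := by
  classical
  have hne : ∃ d, d ∈ Dset K n := ⟨n, hn, inf_le_right⟩
  refine ⟨Nat.find hne, Nat.find_spec hne, fun d hd => ?_⟩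
  -- the least element divides `d` because their gcd lies in `Dset K n` as well
  have hge := Nat.find_min' hne (gcd_mem_Dset K (Nat.find_spec hne) hd)
  have hle := Nat.le_of_dvd (Nat.find_spec hne).1 (Nat.gcd_dvd_left (Nat.find hne) d)
  exact Nat.gcd_eq_left_iff_dvd.mp (le_antisymm hle hge)

theorem inf_Ecyc_le_Ecyc_iff_cK_dvd (hn : 0 < n) {d : ℕ} (hd : d ≠ 0) :
    K ⊓ Ecyc n ≤ Ecyc d ↔ cK K n ∣ d := by
  obtain ⟨c, hc, hdvd⟩ := exists_mem_Dset_forall_dvd K hn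
  rw [cK, setGcd_eq_of_mem_of_forall_dvd hc.1 hc hdvd]
  exact ⟨fun h => hdvd d ⟨Nat.pos_of_ne_zero hd, h⟩, fun h => hc.2.trans (Ecyc_le_Ecyc h hd)⟩

theorem cK_dvd_self (hn : 0 < n) : cK K n ∣ n :=
  (inf_Ecyc_le_Ecyc_iff_cK_dvd K hn hn.ne').mp inf_le_right

end Conductor

section Compositum

theorem relDeg_eq_relfinrank_sup (F A : IntermediateField ℚ ℂ) :
    relDeg F A = relfinrank A (F ⊔ A) :=
  (relfinrank_eq_finrank_of_le le_sup_right).symm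

variable (K : IntermediateField ℚ ℂ) {d n : ℕ}

theorem relfinrank_mul_relDeg_Ecyc (hdn : d ∣ n) (hn : n ≠ 0) :
    relfinrank (Ecyc d) (Ecyc n ⊓ (Ecyc d ⊔ K)) * relDeg (Ecyc n) (Ecyc d ⊔ K) =
      relfinrank (Ecyc d) (Ecyc n) := by
  rw [relDeg_eq_relfinrank_sup, relfinrank_sup_Ecyc hn]
  exact relfinrank_mul_relfinrank (le_inf (Ecyc_le_Ecyc hdn hn) le_sup_left) inf_le_left

theorem relDeg_Ecyc_eq_relfinrank_iff (hdn : d ∣ n) (hn : n ≠ 0) :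
    relDeg (Ecyc n) (Ecyc d ⊔ K) = relfinrank (Ecyc d) (Ecyc n) ↔ K ⊓ Ecyc n ≤ Ecyc d := by
  have hd : d ≠ 0 := ne_zero_of_dvd_ne_zero hn hdn
  have hFE : Ecyc d ≤ Ecyc n := Ecyc_le_Ecyc hdn hn
  constructor
  · intro h
    have hmul := relfinrank_mul_relDeg_Ecyc K hdn hn
    rw [h] at hmul
    have hone := Nat.eq_of_mul_eq_mul_right (relfinrank_Ecyc_pos hn _)
      (hmul.trans (one_mul _).symm)
    exact (le_inf inf_le_right (inf_le_left.trans le_sup_right)).trans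
      (relfinrank_eq_one_iff.mp hone)
  · intro hK
    have hinf : Ecyc d ⊓ K = Ecyc n ⊓ K :=
      le_antisymm (inf_le_inf_right K hFE) (le_inf (inf_comm K _ ▸ hK) inf_le_right)
    have htower := relfinrank_mul_relfinrank (le_sup_right : K ≤ Ecyc d ⊔ K)
      (sup_le (hFE.trans le_sup_left) le_sup_right : Ecyc d ⊔ K ≤ Ecyc n ⊔ K)
    rw [relfinrank_sup_Ecyc hd, relfinrank_sup_Ecyc hn, hinf] at htower
    have hEL : Ecyc n ⊔ (Ecyc d ⊔ K) = Ecyc n ⊔ K := by rw [← sup_assoc, sup_eq_left.mpr hFE]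
    rw [relDeg_eq_relfinrank_sup, hEL]
    refine Nat.eq_of_mul_eq_mul_left (relfinrank_Ecyc_pos hd _) (htower.trans ?_)
    exact (relfinrank_mul_relfinrank (hinf ▸ inf_le_left) hFE).symm

end Compositum

theorem stmt_3_general (K : IntermediateField ℚ ℂ)
    (n p : ℕ) (hn : 0 < n) (hp : p.Prime) (hpn : p ∣ n) :
    relDeg (Ecyc n) (Ecyc (n / p) ⊔ K) = p ↔ p ^ 2 ∣ n ∧ p ∣ n / cK K n := by
  obtain ⟨m, rfl⟩ := hpn
  have hm : m ≠ 0 := right_ne_zero_of_mul hn.ne'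
  rw [Nat.mul_div_cancel_left m hp.pos, pow_two, Nat.mul_dvd_mul_iff_left hp.pos,
    Nat.dvd_div_iff_mul_dvd (cK_dvd_self K hn), mul_comm (cK K _) p,
    Nat.mul_dvd_mul_iff_left hp.pos]
  by_cases hpm : p ∣ m
  · have hFE : relfinrank (Ecyc m) (Ecyc (p * m)) = p := by
      rw [relfinrank_Ecyc_mul_prime hp hm, if_pos hpm]
    rw [and_iff_right hpm, ← inf_Ecyc_le_Ecyc_iff_cK_dvd K hn hm,
      ← relDeg_Ecyc_eq_relfinrank_iff K (dvd_mul_left m p) hn.ne', hFE]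
  · have hmul := relfinrank_mul_relDeg_Ecyc K (dvd_mul_left m p) hn.ne'
    rw [relfinrank_Ecyc_mul_prime hp hm, if_neg hpm] at hmul
    have hle := Nat.le_of_dvd (Nat.sub_pos_of_lt hp.one_lt) (Dvd.intro_left _ hmul)
    simp only [hpm, false_and, iff_false]
    exact (hle.trans_lt (Nat.sub_lt hp.pos one_pos)).ne

/-- For a subfield `K` of the algebraic numbers, `n ∈ ℕ` and a prime `p ∣ n`:
`[E_n K : E_{n/p} K] = p` if and only if `p² ∣ n` and `p ∣ n / c_K(n)`. -/
theorem stmt_3 (K : IntermediateField ℚ ℂ) (hK : ∀ x ∈ K, IsAlgebraic ℚ x)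
    (n p : ℕ) (hn : 0 < n) (hp : p.Prime) (hpn : p ∣ n) :
    relDeg (Ecyc n) (Ecyc (n / p) ⊔ K) = p ↔ p ^ 2 ∣ n ∧ p ∣ n / cK K n :=
  stmt_3_general K n p hn hp hpn
end

section
/- Let m₁, m₂ ∈ ℕ both be odd (and coprime to 2). Then ord(2 mod m₁m₂) ≡ ord(2 mod m₁) · ord(2 mod m₂) (mod 2); that is, the multiplicative order of 2 in (ℤ/m₁m₂ℤ)^× is even if and only if the multiplicative order of 2 in (ℤ/m₁ℤ)^× is even or the multiplicative order of 2 in (ℤ/m₂ℤ)^× is even. -/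
/-!
Let `o`, `o₁`, `o₂` be the orders of `2` modulo `m₁m₂`, `m₁`, `m₂`. Reduction modulo `mᵢ` gives
`oᵢ ∣ o`. Conversely `2 ^ lcm(o₁, o₂) ≡ 1` modulo `lcm(m₁, m₂)`, and raising a number `≡ 1 (mod n)`
to a power `g ∣ n` makes it `≡ 1 (mod n g)`; with `g = gcd(m₁, m₂)` this gives
`o ∣ lcm(o₁, o₂) · gcd(m₁, m₂)`. Since `gcd(m₁, m₂)` is odd, `o` is odd as soon as `o₁` and `o₂` are.
-/

open Finset

theorem mul_natCast_dvd_pow_sub_one {R : Type*} [CommRing R] {x n : R} {g : ℕ}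
    (hg : (g : R) ∣ n) (hx : n ∣ x - 1) : n * g ∣ x ^ g - 1 := by
  have hsum : (g : R) ∣ ∑ i ∈ range g, x ^ i := by
    have hsplit : ∑ i ∈ range g, x ^ i = g + ∑ i ∈ range g, (x ^ i - 1) := by
      simp [sum_sub_distrib]
    rw [hsplit]
    exact dvd_add dvd_rfl
      (dvd_sum fun i _ => (hg.trans hx).trans (sub_one_dvd_pow_sub_one x i))
  rw [← mul_geom_sum]
  exact mul_dvd_mul hx hsum

theorem Nat.pow_modEq_one_mul_of_dvd {x n g : ℕ} (hg : g ∣ n) (hx : x ≡ 1 [MOD n]) :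
    x ^ g ≡ 1 [MOD n * g] := by
  refine (Nat.modEq_iff_dvd.mpr ?_).symm
  push_cast
  exact mul_natCast_dvd_pow_sub_one (Int.natCast_dvd_natCast.mpr hg)
    (by exact_mod_cast Nat.modEq_iff_dvd.mp hx.symm)

namespace ZMod

theorem orderOf_unitOfCoprime_dvd_iff {a n : ℕ} (h : a.Coprime n) (j : ℕ) :
    orderOf (unitOfCoprime a h) ∣ j ↔ a ^ j ≡ 1 [MOD n] := by
  rw [orderOf_dvd_iff_pow_eq_one, Units.ext_iff, ← natCast_eq_natCast_iff]
  push_cast [coe_unitOfCoprime]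
  rfl

theorem orderOf_unitOfCoprime_dvd_of_dvd {a m n : ℕ} (hm : a.Coprime m) (hn : a.Coprime n)
    (hmn : m ∣ n) : orderOf (unitOfCoprime a hm) ∣ orderOf (unitOfCoprime a hn) :=
  (orderOf_unitOfCoprime_dvd_iff hm _).mpr
    (((orderOf_unitOfCoprime_dvd_iff hn _).mp dvd_rfl).of_dvd hmn)

theorem orderOf_unitOfCoprime_mul_dvd {a m₁ m₂ : ℕ} (h₁ : a.Coprime m₁) (h₂ : a.Coprime m₂) :
    orderOf (unitOfCoprime a (h₁.mul_right h₂)) ∣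
      (orderOf (unitOfCoprime a h₁)).lcm (orderOf (unitOfCoprime a h₂)) * m₁.gcd m₂ := by
  have hlcm : a ^ (orderOf (unitOfCoprime a h₁)).lcm (orderOf (unitOfCoprime a h₂)) ≡ 1
      [MOD m₁.lcm m₂] :=
    Nat.mod_lcm ((orderOf_unitOfCoprime_dvd_iff h₁ _).mp (Nat.dvd_lcm_left _ _))
      ((orderOf_unitOfCoprime_dvd_iff h₂ _).mp (Nat.dvd_lcm_right _ _))
  rw [orderOf_unitOfCoprime_dvd_iff, pow_mul, ← Nat.gcd_mul_lcm, mul_comm]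
  exact Nat.pow_modEq_one_mul_of_dvd
    ((Nat.gcd_dvd_left m₁ m₂).trans (Nat.dvd_lcm_left m₁ m₂)) hlcm

theorem even_orderOf_unitOfCoprime_mul_iff {a m₁ m₂ : ℕ} (h₁ : a.Coprime m₁)
    (h₂ : a.Coprime m₂) (hgcd : Odd (m₁.gcd m₂)) :
    Even (orderOf (unitOfCoprime a (h₁.mul_right h₂))) ↔
      Even (orderOf (unitOfCoprime a h₁)) ∨ Even (orderOf (unitOfCoprime a h₂)) := by
  constructor
  · contrapose!
    simp only [Nat.not_even_iff_odd]
    rintro ⟨ho₁, ho₂⟩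
    exact (((ho₁.mul ho₂).of_dvd_nat (Nat.lcm_dvd_mul _ _)).mul hgcd).of_dvd_nat
      (orderOf_unitOfCoprime_mul_dvd h₁ h₂)
  · rintro (he | he)
    · exact he.trans_dvd (orderOf_unitOfCoprime_dvd_of_dvd h₁ _ (dvd_mul_right m₁ m₂))
    · exact he.trans_dvd (orderOf_unitOfCoprime_dvd_of_dvd h₂ _ (dvd_mul_left m₂ m₁))

end ZMod

theorem stmt_18_general (m₁ m₂ : ℕ)
    (hc₁ : Nat.Coprime 2 m₁) (hc₂ : Nat.Coprime 2 m₂) :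
    orderOf (ZMod.unitOfCoprime 2 (hc₁.mul_right hc₂)) ≡
      orderOf (ZMod.unitOfCoprime 2 hc₁) * orderOf (ZMod.unitOfCoprime 2 hc₂) [MOD 2] ∧
    (Even (orderOf (ZMod.unitOfCoprime 2 (hc₁.mul_right hc₂))) ↔
      Even (orderOf (ZMod.unitOfCoprime 2 hc₁)) ∨
        Even (orderOf (ZMod.unitOfCoprime 2 hc₂))) := by
  have hgcd : Odd (m₁.gcd m₂) := (Nat.coprime_two_left.mp hc₁).of_dvd_nat (Nat.gcd_dvd_left m₁ m₂)
  have key := ZMod.even_orderOf_unitOfCoprime_mul_iff hc₁ hc₂ hgcd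
  refine ⟨?_, key⟩
  rw [← Nat.even_mul] at key
  simp only [Nat.even_iff] at key
  unfold Nat.ModEq
  omega

/-- For odd `m₁, m₂`: the multiplicative order of `2` modulo `m₁·m₂` is
congruent mod `2` to the product of the multiplicative orders of `2` modulo `m₁` and modulo
`m₂`; that is, `ord(2 mod m₁m₂)` is even iff `ord(2 mod m₁)` is even or `ord(2 mod m₂)` is
even. -/
theorem stmt_18 (m₁ m₂ : ℕ) (h₁ : Odd m₁) (h₂ : Odd m₂)
    (hc₁ : Nat.Coprime 2 m₁) (hc₂ : Nat.Coprime 2 m₂) :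
    orderOf (ZMod.unitOfCoprime 2 (hc₁.mul_right hc₂)) ≡
      orderOf (ZMod.unitOfCoprime 2 hc₁) * orderOf (ZMod.unitOfCoprime 2 hc₂) [MOD 2] ∧
    (Even (orderOf (ZMod.unitOfCoprime 2 (hc₁.mul_right hc₂))) ↔
      Even (orderOf (ZMod.unitOfCoprime 2 hc₁)) ∨
        Even (orderOf (ZMod.unitOfCoprime 2 hc₂))) :=
  stmt_18_general m₁ m₂ hc₁ hc₂
end
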